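/- Let N ≥ 1 demonstrations be ranked so that the first αN are clean (per-demonstration noise floor σ_c²) and the remaining (1−α)N are noisy (noise floor σ_n²), with 0 < α < 1, αN an integer with 1 ≤ αN < N, and 0 ≤ σ_c² < σ_n². For a retention budget k ∈ {1, …, N}, define the retained noise floor σ̄²(k) = σ_c² if k ≤ αN and σ̄²(k) = (αN σ_c² + (k − αN) σ_n²)/k if k > αN, and the expected error 𝔈(k) = σ̄²(k) + D/k for a constant D > 0 (the estimation-error coefficient). If D < αN (σ_n² − σ_c²), then 𝔈 attains its minimum over {1, …, N} at the interior point k* = αN: 𝔈(αN) ≤ 𝔈(k) for all k ∈ {1, …, N}, and 𝔈(αN) < 𝔈(N). In particular, a quality–quantity trade-off with an interior optimum exists exactly in the regime where the noise gap is large relative to the estimation error. -/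
import Mathlib


/-- Noise floor of the retained data when the top `k` of the ranked demonstrations are
kept, where the first `m = αN` demonstrations are clean (noise floor `σ_c²`) and the
rest are noisy (noise floor `σ_n²`): `σ̄²(k) = σ_c²` if `k ≤ m` and
`σ̄²(k) = (m σ_c² + (k − m) σ_n²)/k` if `k > m`. -/
noncomputable def retainedNoiseFloor (m : ℕ) (σcSq σnSq : ℝ) (k : ℕ) : ℝ :=
  if k ≤ m then σcSq else ((m : ℝ) * σcSq + ((k : ℝ) - (m : ℝ)) * σnSq) / (k : ℝ)

/-- Expected error with `k` retained demonstrations: noise floor plus statistical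
estimation error `D/k`. -/
noncomputable def expectedError (m : ℕ) (σcSq σnSq D : ℝ) (k : ℕ) : ℝ :=
  retainedNoiseFloor m σcSq σnSq k + D / (k : ℝ)

/-- **Quality–quantity trade-off with interior optimum.** With `N ≥ 1` ranked
demonstrations of which the first `αN` are clean (`0 < α < 1`, `1 ≤ αN < N`,
`0 ≤ σ_c² < σ_n²`) and estimation-error coefficient `D > 0`, if
`D < αN (σ_n² − σ_c²)` then the expected error `𝔈(k) = σ̄²(k) + D/k` attains its
minimum over `{1, …, N}` at the interior point `k* = αN`, and `𝔈(αN) < 𝔈(N)`. -/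
theorem quality_quantity_interior_optimum
    (N m : ℕ) (α σcSq σnSq D : ℝ)
    (hα0 : 0 < α) (hα1 : α < 1) (hm : (m : ℝ) = α * (N : ℝ))
    (hm1 : 1 ≤ m) (hmN : m < N)
    (hσc : 0 ≤ σcSq) (hcn : σcSq < σnSq) (hD : 0 < D)
    (hgap : D < (m : ℝ) * (σnSq - σcSq)) :
    (∀ k : ℕ, 1 ≤ k → k ≤ N →
        expectedError m σcSq σnSq D m ≤ expectedError m σcSq σnSq D k)
    ∧ expectedError m σcSq σnSq D m < expectedError m σcSq σnSq D N := by
  have hm0 : (0:ℝ) < m := by exact_mod_cast hm1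
  have key : ∀ k : ℕ, m < k →
      expectedError m σcSq σnSq D m < expectedError m σcSq σnSq D k := by
    intro k hk
    have hmk : (m:ℝ) < k := by exact_mod_cast hk
    have hk0 : (0:ℝ) < k := lt_trans hm0 hmk
    simp only [expectedError, retainedNoiseFloor, le_refl, if_pos, if_neg (not_le.mpr hk)]
    rw [← sub_pos]
    have h : ((m:ℝ) * σcSq + ((k:ℝ) - m) * σnSq) / k + D / k - (σcSq + D / m)
        = (((k:ℝ) - m) * ((m:ℝ) * (σnSq - σcSq) - D)) / ((k:ℝ) * m) := by
      field_simp
      ring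
    rw [h]
    apply div_pos
    · exact mul_pos (by linarith) (by linarith)
    · exact mul_pos hk0 hm0
  refine ⟨fun k hk1 hkN => ?_, key N hmN⟩
  rcases le_or_gt k m with hkm | hkm
  · have hk0 : (0:ℝ) < k := by exact_mod_cast hk1
    have hkm' : (k:ℝ) ≤ m := by exact_mod_cast hkm
    simp only [expectedError, retainedNoiseFloor, le_refl, if_pos, if_pos hkm]
    have : D / (m:ℝ) ≤ D / k := div_le_div_of_nonneg_left hD.le hk0 hkm'
    linarith
  · exact (key k hkm).le
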